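/- Let C be an oriented linear chord diagram of d chords. Define C_+^∧ := {(i_k+1, j_k+1) : (i_k,j_k) ∈ C} ∪ {(1, 2d+2)} and C_−^∧ := {(i_k+1, j_k+1) : (i_k,j_k) ∈ C} ∪ {(2d+2, 1)}, both oriented linear chord diagrams of d+1 chords. Then ⟨C_+^∧⟩ = (−A³)·⟨C⟩ and ⟨C_−^∧⟩ = (−A⁻³)·⟨C⟩. -/

import Mathlib

open Equiv LaurentPolynomial Finset

/-- `C` is an oriented linear chord diagram of `d` chords: a set of `d` ordered pairs of
integers whose entries (first and second components together) are exactly `{1, …, 2d}`.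
(Together with `C.card = d` this forces all `2d` entries to be pairwise distinct.) -/
def IsOLCD (d : ℕ) (C : Finset (ℤ × ℤ)) : Prop :=
  C.card = d ∧ (C.image Prod.fst ∪ C.image Prod.snd) = Finset.Icc 1 (2 * (d : ℤ))

/-- The set `R_c` of transpositions of `ℤ` associated to a chord `c = (i, j)` carrying the
label `lbl` (`true` = `A`, `false` = `B`). -/
def Rset (lbl : Bool) (c : ℤ × ℤ) : Set (Equiv.Perm ℤ) :=
  if lbl = decide (c.1 < c.2) then
    {Equiv.swap c.1 (c.2 - 1), Equiv.swap (c.1 - 1) c.2}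
  else
    {Equiv.swap c.1 c.2, Equiv.swap (c.1 - 1) (c.2 - 1)}

/-- The subgroup of permutations generated by `⋃_{c ∈ C} R_c`, for a state `s` of `C`. -/
def stateGroup (C : Finset (ℤ × ℤ)) (s : {c // c ∈ C} → Bool) : Subgroup (Equiv.Perm ℤ) :=
  Subgroup.closure (⋃ c : {c // c ∈ C}, Rset (s c) c.1)

/-- `Γ_s`: the number of orbits of the action of `stateGroup C s` on `{0, 1, …, 2d}`,
counted as the number of distinct orbits of elements of `{0, …, 2d}`. -/
noncomputable def Gamma (d : ℕ) (C : Finset (ℤ × ℤ)) (s : {c // c ∈ C} → Bool) : ℕ :=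
  ((fun x : ℤ => MulAction.orbit (stateGroup C s) x) '' Set.Icc (0 : ℤ) (2 * d)).ncard

/-- `⟨C|s⟩ = A^(|s⁻¹(A)| - |s⁻¹(B)|) * (-A² - A⁻²)^(Γ_s - 1)`. -/
noncomputable def bracketTerm (d : ℕ) (C : Finset (ℤ × ℤ)) (s : {c // c ∈ C} → Bool) :
    LaurentPolynomial ℤ :=
  T (((Finset.univ.filter fun c => s c = true).card : ℤ) -
      ((Finset.univ.filter fun c => s c = false).card : ℤ)) *
    (-T 2 - T (-2)) ^ (Gamma d C s - 1)

/-- The bracket polynomial `⟨C⟩ = Σ_s ⟨C|s⟩`, summing over all `2^d` states of `C`. -/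
noncomputable def bracket (d : ℕ) (C : Finset (ℤ × ℤ)) : LaurentPolynomial ℤ :=
  ∑ s : ({c // c ∈ C} → Bool), bracketTerm d C s

/-- The maximal exponent occurring in a Laurent polynomial (junk value `0` for `f = 0`). -/
noncomputable def maxDeg (f : LaurentPolynomial ℤ) : ℤ := f.coeff.support.max.unbotD 0

/-- The minimal exponent occurring in a Laurent polynomial (junk value `0` for `f = 0`). -/
noncomputable def minDeg (f : LaurentPolynomial ℤ) : ℤ := f.coeff.support.min.untopD 0

/-- The span of a Laurent polynomial: maximal minus minimal exponent. -/
noncomputable def spanL (f : LaurentPolynomial ℤ) : ℤ := maxDeg f - minDeg f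

/-!
Write `σ = (x ↦ x + 1)`. A state of the wedge is a state `s` of `C` together with a label `b` of
the new chord, and its permutation group is generated by the `σ`-conjugates of the generators for
`s` together with the two transpositions `R_b` of the new chord. The decisive fact is that `0`
and `2d` always lie in one orbit for a state of `C`: a mod-2 orbit indicator `f` satisfies
`f i + f (i-1) + f j + f (j-1) = 0` for every chord `(i, j)`, and summed over the chords this
telescopes to `f (2d) - f 0`. So for the label `A` of the positive chord `(1, 2d+2)` the
transposition `(1, 2d+1)` joins two points already in one orbit while `(0, 2d+2)` adds a new
orbit, and for the label `B` the points `0` and `2d+2` join existing orbits. Hence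
`⟨C₊^∧⟩ = (A (-A² - A⁻²) + A⁻¹) ⟨C⟩ = -A³ ⟨C⟩`; reversing the new chord exchanges its labels.
-/

theorem Set.ncard_image_eq_of_eq_iff {α β γ : Type*} {f : α → β} {g : α → γ} {A : Set α}
    (h : ∀ x ∈ A, ∀ y ∈ A, f x = f y ↔ g x = g y) : (f '' A).ncard = (g '' A).ncard := by
  have hfst : Set.InjOn Prod.fst ((fun x => (f x, g x)) '' A) := by
    rintro _ ⟨x, hx, rfl⟩ _ ⟨y, hy, rfl⟩ hxy
    exact Prod.ext hxy ((h x hx y hy).mp hxy)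
  have hsnd : Set.InjOn Prod.snd ((fun x => (f x, g x)) '' A) := by
    rintro _ ⟨x, hx, rfl⟩ _ ⟨y, hy, rfl⟩ hxy
    exact Prod.ext ((h x hx y hy).mpr hxy) hxy
  simpa only [Set.image_image] using hfst.ncard_image.trans hsnd.ncard_image.symm

namespace MulAction

variable {G α : Type*} [Group G] [MulAction G α]

theorem smul_mem_orbit_closure {S : Set G} {g : G} (hg : g ∈ S) (a : α) :
    g • a ∈ orbit (Subgroup.closure S) a :=
  ⟨⟨g, Subgroup.subset_closure hg⟩, rfl⟩

theorem orbitRel_closure_le {S : Set G} {r : Setoid α} (hS : ∀ g ∈ S, ∀ a, r (g • a) a) :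
    orbitRel (Subgroup.closure S) α ≤ r := by
  have key : ∀ g ∈ Subgroup.closure S, ∀ a, r (g • a) a := by
    intro g hg
    induction hg using Subgroup.closure_induction with
    | mem g hg => exact hS g hg
    | one => exact fun a => by rw [one_smul]
    | mul g h _ _ hg hh => exact fun a => by rw [mul_smul]; exact r.trans (hg _) (hh a)
    | inv g _ hg => exact fun a => r.symm (by simpa using hg (g⁻¹ • a))
  rintro _ a ⟨⟨g, hg⟩, rfl⟩
  exact key g hg a

variable {H β : Type*} [Group H] [MulAction H β]

theorem ncard_image_orbit_eq {A : Set α} {B : Set β} (φ : α → β) (hφ : Set.MapsTo φ A B)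
    (hB : ∀ y ∈ B, ∃ x ∈ A, y ∈ orbit H (φ x))
    (hrel : ∀ x ∈ A, ∀ y ∈ A, φ x ∈ orbit H (φ y) ↔ x ∈ orbit G y) :
    (orbit H '' B).ncard = (orbit G '' A).ncard := by
  have himage : orbit H '' B = (orbit H ∘ φ) '' A := by
    ext O
    constructor
    · rintro ⟨y, hy, rfl⟩
      obtain ⟨x, hx, hyx⟩ := hB y hy
      exact ⟨x, hx, (orbit_eq_iff.mpr hyx).symm⟩
    · rintro ⟨x, hx, rfl⟩
      exact ⟨φ x, hφ hx, rfl⟩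
  rw [himage]
  exact Set.ncard_image_eq_of_eq_iff fun x hx y hy => by
    simp only [Function.comp_apply, orbit_eq_iff, hrel x hx y hy]

end MulAction

theorem Equiv.swap_apply_rel {α : Type*} [DecidableEq α] {r : Setoid α} {u v : α} (h : r u v)
    (a : α) : r (swap u v a) a := by
  rcases eq_or_ne a u with rfl | hau
  · simpa only [swap_apply_left] using r.symm h
  rcases eq_or_ne a v with rfl | hav
  · simpa only [swap_apply_right] using h
  · simpa only [swap_apply_of_ne_of_ne hau hav] using r.refl a

theorem Equiv.Perm.mem_orbit_closure_of_swap_mem {α : Type*} [DecidableEq α]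
    {S : Set (Perm α)} {u v : α} (h : swap u v ∈ S) :
    v ∈ MulAction.orbit (Subgroup.closure S) u := by
  simpa using MulAction.smul_mem_orbit_closure h u

theorem Finset.sum_Icc_one_sub_sub_one {M : Type*} [AddCommGroup M] (f : ℤ → M) (n : ℕ) :
    ∑ k ∈ Icc (1 : ℤ) n, (f k - f (k - 1)) = f n - f 0 := by
  induction n with
  | zero => simp
  | succ n ih =>
    rw [Nat.cast_succ, ← insert_Icc_right_eq_Icc_add_one (by omega), sum_insert (by simp), ih,
      add_sub_cancel_right]
    abel

section ChordDiagram

variable {d : ℕ} {C : Finset (ℤ × ℤ)}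

open MulAction

theorem IsOLCD.mem_Icc (hC : IsOLCD d C) {c : ℤ × ℤ} (hc : c ∈ C) :
    c.1 ∈ Icc 1 (2 * (d : ℤ)) ∧ c.2 ∈ Icc 1 (2 * (d : ℤ)) := by
  rw [← hC.2]
  exact ⟨mem_union_left _ (mem_image_of_mem _ hc), mem_union_right _ (mem_image_of_mem _ hc)⟩

theorem IsOLCD.sum_fst_add_snd {M : Type*} [AddCommMonoid M] (hC : IsOLCD d C) (f : ℤ → M) :
    ∑ c ∈ C, (f c.1 + f c.2) = ∑ k ∈ Icc 1 (2 * (d : ℤ)), f k := by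
  obtain ⟨hcard, hunion⟩ := hC
  have h2d : #(C.image Prod.fst ∪ C.image Prod.snd) = 2 * d := by
    rw [hunion, Int.card_Icc]; omega
  have hfst : #(C.image Prod.fst) ≤ #C := card_image_le
  have hsnd : #(C.image Prod.snd) ≤ #C := card_image_le
  have hinter := card_union_add_card_inter (C.image Prod.fst) (C.image Prod.snd)
  have hdisj : Disjoint (C.image Prod.fst) (C.image Prod.snd) := by
    rw [disjoint_iff_inter_eq_empty, ← card_eq_zero]; omega
  rw [← hunion, sum_union hdisj, sum_image (card_image_iff.mp (by omega)),
    sum_image (card_image_iff.mp (by omega)), sum_add_distrib]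

def stateGens (C : Finset (ℤ × ℤ)) (s : {c // c ∈ C} → Bool) : Set (Perm ℤ) :=
  ⋃ c : {c // c ∈ C}, Rset (s c) c.1

theorem stateGroup_eq_closure (s : {c // c ∈ C} → Bool) :
    stateGroup C s = Subgroup.closure (stateGens C s) := rfl

theorem IsOLCD.exists_swap_of_mem_stateGens (hC : IsOLCD d C) {s : {c // c ∈ C} → Bool}
    {g : Perm ℤ} (hg : g ∈ stateGens C s) :
    ∃ u ∈ Set.Icc 0 (2 * (d : ℤ)), ∃ v ∈ Set.Icc 0 (2 * (d : ℤ)), g = swap u v := by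
  obtain ⟨c, hgc⟩ := Set.mem_iUnion.mp hg
  obtain ⟨hi, hj⟩ := hC.mem_Icc c.2
  rw [Finset.mem_Icc] at hi hj
  unfold Rset at hgc
  split at hgc <;> rcases hgc with rfl | rfl <;>
    exact ⟨_, ⟨by omega, by omega⟩, _, ⟨by omega, by omega⟩, rfl⟩

theorem chord_sum_eq_zero_of_Rset_invariant {f : ℤ → ZMod 2} {lbl : Bool} {c : ℤ × ℤ}
    (hf : ∀ g ∈ Rset lbl c, ∀ a, f (g a) = f a) :
    f c.1 + f (c.1 - 1) + (f c.2 + f (c.2 - 1)) = 0 := by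
  rw [← CharTwo.add_self_eq_zero (f c.1 + f (c.1 - 1))]
  unfold Rset at hf
  split at hf <;>
  · have h₁ := hf _ (Or.inl rfl) c.1
    have h₂ := hf _ (Or.inr rfl) (c.1 - 1)
    rw [swap_apply_left] at h₁ h₂
    linear_combination h₁ + h₂

theorem IsOLCD.apply_two_mul_eq_apply_zero (hC : IsOLCD d C) {s : {c // c ∈ C} → Bool}
    {f : ℤ → ZMod 2} (hf : ∀ g ∈ stateGens C s, ∀ a, f (g a) = f a) : f (2 * d) = f 0 := by
  have hchords : ∑ c ∈ C, (f c.1 + f (c.1 - 1) + (f c.2 + f (c.2 - 1))) = 0 :=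
    sum_eq_zero fun c hc =>
      chord_sum_eq_zero_of_Rset_invariant fun g hg => hf g (Set.mem_iUnion.mpr ⟨⟨c, hc⟩, hg⟩)
  rw [hC.sum_fst_add_snd fun k => f k + f (k - 1)] at hchords
  simp_rw [← CharTwo.sub_eq_add] at hchords
  rw [show 2 * (d : ℤ) = ((2 * d : ℕ) : ℤ) by push_cast; ring, sum_Icc_one_sub_sub_one] at hchords
  exact_mod_cast sub_eq_zero.mp hchords

theorem IsOLCD.two_mul_mem_orbit_zero (hC : IsOLCD d C) (s : {c // c ∈ C} → Bool) :
    (2 * d : ℤ) ∈ orbit (stateGroup C s) 0 := by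
  classical
  let f : ℤ → ZMod 2 := fun y => if 0 ∈ orbit (stateGroup C s) y then 1 else 0
  have hf : ∀ g ∈ stateGens C s, ∀ a, f (g a) = f a := fun g hg a => by
    have horbit : orbit (stateGroup C s) (g a) = orbit (stateGroup C s) a :=
      orbit_smul (⟨g, Subgroup.subset_closure hg⟩ : stateGroup C s) a
    simp only [f, horbit]
  have h := hC.apply_two_mul_eq_apply_zero hf
  by_contra hne
  simp [f, mem_orbit_symm, hne, mem_orbit_self] at h

theorem IsOLCD.orbit_neg_one_notMem (hC : IsOLCD d C) (s : {c // c ∈ C} → Bool) :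
    orbit (stateGroup C s) (-1) ∉ orbit (stateGroup C s) '' Set.Icc 0 (2 * (d : ℤ)) := by
  rintro ⟨x, hx, hxo⟩
  have hle : orbitRel (stateGroup C s) ℤ ≤ Setoid.ker (· ∈ Set.Icc 0 (2 * (d : ℤ))) := by
    refine orbitRel_closure_le fun g hg a => ?_
    obtain ⟨u, hu, v, hv, rfl⟩ := hC.exists_swap_of_mem_stateGens hg
    exact swap_apply_rel (by simp [Setoid.ker_def, hu, hv]) a
  have h := hle (show x ∈ orbit (stateGroup C s) (-1) from hxo ▸ mem_orbit_self x)
  simp [Setoid.ker_def, hx] at h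

end ChordDiagram

theorem MulAut.conj_addRight_swap (u v : ℤ) :
    MulAut.conj (Equiv.addRight 1) (swap u v) = swap (u + 1) (v + 1) :=
  (swap_apply_apply _ u v).symm

theorem Rset_shift (lbl : Bool) (c : ℤ × ℤ) :
    Rset lbl (c.1 + 1, c.2 + 1) = MulAut.conj (Equiv.addRight 1) '' Rset lbl c := by
  unfold Rset
  simp only [add_lt_add_iff_right]
  split_ifs <;>
    simp only [Set.image_pair, MulAut.conj_addRight_swap, add_sub_cancel_right, sub_add_cancel]

theorem Rset_swap {i j : ℤ} (h : i ≠ j) (lbl : Bool) : Rset (!lbl) (j, i) = Rset lbl (i, j) := by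
  have hlt : decide (j < i) = !decide (i < j) := by
    rcases lt_or_gt_of_ne h with hij | hij <;> simp [hij, hij.not_gt]
  unfold Rset
  simp only [hlt, Bool.not_inj_iff]
  split_ifs
  · rw [swap_comm j, swap_comm (j - 1), Set.pair_comm]
  · rw [swap_comm j, swap_comm (j - 1)]

theorem Rset_true_wedge (d : ℕ) :
    Rset true (1, 2 * (d : ℤ) + 2) = {swap 1 (2 * (d : ℤ) + 1), swap 0 (2 * (d : ℤ) + 2)} := by
  norm_num [Rset, show (1 : ℤ) < 2 * d + 2 by omega, show 2 * (d : ℤ) + 2 - 1 = 2 * d + 1 by ring]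

theorem Rset_false_wedge (d : ℕ) :
    Rset false (1, 2 * (d : ℤ) + 2) = {swap 1 (2 * (d : ℤ) + 2), swap 0 (2 * (d : ℤ) + 1)} := by
  norm_num [Rset, show (1 : ℤ) < 2 * d + 2 by omega, show 2 * (d : ℤ) + 2 - 1 = 2 * d + 1 by ring]

abbrev shiftGens (C : Finset (ℤ × ℤ)) (s : {c // c ∈ C} → Bool) : Set (Perm ℤ) :=
  MulAut.conj (Equiv.addRight 1) '' stateGens C s

section WedgeOrbits

variable {d : ℕ} {C : Finset (ℤ × ℤ)}

open MulAction

theorem IsOLCD.ncard_orbits_wedge (hC : IsOLCD d C) (s : {c // c ∈ C} → Bool)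
    {N : Set (Perm ℤ)} {A : Set ℤ} (ψ : ℤ → ℤ)
    (hsub : Set.Icc 0 (2 * (d : ℤ)) ⊆ A) (hA : A ⊆ Set.Icc (-1) (2 * d + 1))
    (hψ : ∀ x ∈ A, ψ (x + 1) = x)
    (hN : ∀ g ∈ N, ∃ u v, g = swap u v ∧ ψ u ∈ orbit (stateGroup C s) (ψ v))
    (hcover : ∀ y ∈ Set.Icc 0 (2 * (d : ℤ) + 2), ∃ x ∈ A, y ∈
      orbit (Subgroup.closure (N ∪ shiftGens C s)) (x + 1)) :
    (orbit (Subgroup.closure (N ∪ shiftGens C s)) ''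
      Set.Icc 0 (2 * (d : ℤ) + 2)).ncard = (orbit (stateGroup C s) '' A).ncard := by
  set G' := Subgroup.closure (N ∪ shiftGens C s)
  refine ncard_image_orbit_eq (· + 1) (fun x hx => ?_) hcover
    fun x hx y hy => ⟨fun h => ?_, fun h => ?_⟩
  · have := hA hx
    simp only [Set.mem_Icc] at this ⊢
    omega
  · have hle : orbitRel G' ℤ ≤ Setoid.comap ψ (orbitRel (stateGroup C s) ℤ) := by
      refine orbitRel_closure_le ?_
      rintro g (hg | ⟨g₀, hg₀, rfl⟩) a
      · obtain ⟨u, v, rfl, huv⟩ := hN g hg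
        exact swap_apply_rel huv a
      · obtain ⟨u, hu, v, hv, rfl⟩ := hC.exists_swap_of_mem_stateGens hg₀
        rw [MulAut.conj_addRight_swap]
        refine swap_apply_rel ?_ a
        show ψ (u + 1) ∈ orbit _ (ψ (v + 1))
        rw [hψ u (hsub hu), hψ v (hsub hv)]
        exact mem_orbit_symm.mp (Perm.mem_orbit_closure_of_swap_mem hg₀)
    simpa only [Setoid.comap_rel, orbitRel_apply, hψ x hx, hψ y hy] using hle h
  · have hle : orbitRel (stateGroup C s) ℤ ≤ Setoid.comap (· + 1) (orbitRel G' ℤ) := by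
      refine orbitRel_closure_le fun g (hg : g ∈ stateGens C s) a => ?_
      show g a + 1 ∈ orbit G' (a + 1)
      convert smul_mem_orbit_closure
        (Set.mem_union_right N (Set.mem_image_of_mem (MulAut.conj (Equiv.addRight 1)) hg))
        (a + 1) using 1
      simp
    exact hle h

theorem IsOLCD.ncard_orbits_wedge_true (hC : IsOLCD d C) (s : {c // c ∈ C} → Bool) :
    (orbit (Subgroup.closure (Rset true (1, 2 * (d : ℤ) + 2) ∪ shiftGens C s)) ''
      Set.Icc 0 (2 * (d : ℤ) + 2)).ncard = Gamma d C s + 1 := by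
  rw [Rset_true_wedge]
  have hN₀ : (2 * d + 2 : ℤ) ∈ orbit (Subgroup.closure
      ({swap 1 (2 * (d : ℤ) + 1), swap 0 (2 * (d : ℤ) + 2)} ∪ shiftGens C s)) (-1 + 1) := by
    rw [neg_add_cancel]
    exact Perm.mem_orbit_closure_of_swap_mem (Or.inl (Or.inr rfl))
  -- The new orbit `{0, 2d+2}` is matched with the orbit `{-1}`, on which the old group is trivial.
  rw [hC.ncard_orbits_wedge s (A := insert (-1) (Set.Icc 0 (2 * d)))
    (fun t => if t = 2 * d + 2 then -1 else t - 1) (Set.subset_insert _ _)]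
  · rw [Set.image_insert_eq, Set.ncard_insert_of_notMem (hC.orbit_neg_one_notMem s)]
    rfl
  · intro x hx
    simp only [Set.mem_insert_iff, Set.mem_Icc] at hx ⊢
    omega
  · intro x hx
    simp only [Set.mem_insert_iff, Set.mem_Icc] at hx
    simp only [add_sub_cancel_right, ite_eq_right_iff]
    omega
  · rintro g (rfl | rfl)
    · refine ⟨1, 2 * d + 1, rfl, ?_⟩
      rw [if_neg (by omega), if_neg (by omega), sub_self, add_sub_cancel_right, mem_orbit_symm]
      exact hC.two_mul_mem_orbit_zero s
    · exact ⟨0, 2 * d + 2, rfl, by simp [mem_orbit_self]⟩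
  · intro y hy
    rw [Set.mem_Icc] at hy
    rcases eq_or_ne y (2 * d + 2) with rfl | hy'
    · exact ⟨-1, Set.mem_insert _ _, hN₀⟩
    · refine ⟨y - 1, ?_, by simp [mem_orbit_self]⟩
      simp only [Set.mem_insert_iff, Set.mem_Icc]
      omega

theorem IsOLCD.ncard_orbits_wedge_false (hC : IsOLCD d C) (s : {c // c ∈ C} → Bool) :
    (orbit (Subgroup.closure (Rset false (1, 2 * (d : ℤ) + 2) ∪ shiftGens C s)) ''
      Set.Icc 0 (2 * (d : ℤ) + 2)).ncard = Gamma d C s := by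
  rw [Rset_false_wedge]
  have hN₁ : (2 * d + 2 : ℤ) ∈ orbit (Subgroup.closure
      ({swap 1 (2 * (d : ℤ) + 2), swap 0 (2 * (d : ℤ) + 1)} ∪ shiftGens C s)) (0 + 1) := by
    rw [zero_add]
    exact Perm.mem_orbit_closure_of_swap_mem (Or.inl (Or.inl rfl))
  have hN₀ : (0 : ℤ) ∈ orbit (Subgroup.closure
      ({swap 1 (2 * (d : ℤ) + 2), swap 0 (2 * (d : ℤ) + 1)} ∪ shiftGens C s)) (2 * d + 1 : ℤ) := by
    rw [mem_orbit_symm]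
    exact Perm.mem_orbit_closure_of_swap_mem (Or.inl (Or.inr rfl))
  rw [hC.ncard_orbits_wedge s (A := Set.Icc 0 (2 * d))
    (fun t => if t = 0 then 2 * d else if t = 2 * d + 2 then 0 else t - 1) subset_rfl]
  · rfl
  · intro x hx
    simp only [Set.mem_Icc] at hx ⊢
    omega
  · intro x hx
    rw [Set.mem_Icc] at hx
    rw [if_neg (by omega), if_neg (by omega), add_sub_cancel_right]
  · rintro g (rfl | rfl)
    · refine ⟨1, 2 * d + 2, rfl, ?_⟩
      simp [show (2 * d + 2 : ℤ) ≠ 0 by omega, mem_orbit_self]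
    · refine ⟨0, 2 * d + 1, rfl, ?_⟩
      simp [show (2 * d + 1 : ℤ) ≠ 0 by omega, mem_orbit_self]
  · intro y hy
    rw [Set.mem_Icc] at hy
    rcases eq_or_ne y 0 with rfl | hy₀
    · exact ⟨2 * d, ⟨by omega, le_rfl⟩, hN₀⟩
    rcases eq_or_ne y (2 * d + 2) with rfl | hy₂
    · exact ⟨0, ⟨le_rfl, by omega⟩, hN₁⟩
    · exact ⟨y - 1, ⟨by omega, by omega⟩, by simp [mem_orbit_self]⟩

section Wedge

variable {d : ℕ} {C : Finset (ℤ × ℤ)} {x₀ : ℤ × ℤ}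

def wedge (x₀ : ℤ × ℤ) (C : Finset (ℤ × ℤ)) : Finset (ℤ × ℤ) :=
  insert x₀ (C.image fun p => (p.1 + 1, p.2 + 1))

theorem IsOLCD.notMem_image_shift (hC : IsOLCD d C) {i j : ℤ} (h : i ≤ 1 ∨ j ≤ 1) :
    (i, j) ∉ C.image fun p => (p.1 + 1, p.2 + 1) := by
  simp only [mem_image, Prod.mk.injEq, not_exists, not_and]
  intro c hc hi hj
  have := hC.mem_Icc hc
  simp only [Finset.mem_Icc] at this
  omega

def wedgeIndexEquiv (hx₀ : x₀ ∉ C.image fun p => (p.1 + 1, p.2 + 1)) :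
    {c // c ∈ wedge x₀ C} ≃ Option {c // c ∈ C} :=
  (subtypeInsertEquivOption hx₀).trans <| Equiv.optionCongr <|
    (((Equiv.addRight 1).prodCongr (Equiv.addRight 1)).subtypeEquiv fun _ =>
      ((Equiv.addRight 1).prodCongr (Equiv.addRight 1)).injective.mem_finset_image.symm).symm

def wedgeStateEquiv (hx₀ : x₀ ∉ C.image fun p => (p.1 + 1, p.2 + 1)) :
    Bool × ({c // c ∈ C} → Bool) ≃ ({c // c ∈ wedge x₀ C} → Bool) :=
  piOptionEquivProd.symm.trans ((wedgeIndexEquiv hx₀).symm.arrowCongr (Equiv.refl Bool))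

variable (hx₀ : x₀ ∉ C.image fun p => (p.1 + 1, p.2 + 1))

theorem wedgeStateEquiv_apply_symm (b : Bool) (s : {c // c ∈ C} → Bool)
    (o : Option {c // c ∈ C}) :
    wedgeStateEquiv hx₀ (b, s) ((wedgeIndexEquiv hx₀).symm o) = o.elim b s := by
  cases o <;> simp [wedgeStateEquiv]

theorem stateGens_wedge (b : Bool) (s : {c // c ∈ C} → Bool) :
    stateGens (wedge x₀ C) (wedgeStateEquiv hx₀ (b, s)) =
      Rset b x₀ ∪ shiftGens C s := by
  unfold shiftGens stateGens
  rw [← (wedgeIndexEquiv hx₀).symm.surjective.iUnion_comp, Set.iUnion_option, Set.image_iUnion]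
  simp only [wedgeStateEquiv_apply_symm, Option.elim_none, Option.elim_some]
  exact congrArg (Rset b x₀ ∪ ·) (Set.iUnion_congr fun c => Rset_shift (s c) c.1)

theorem card_filter_wedgeStateEquiv (b : Bool) (s : {c // c ∈ C} → Bool) (t : Bool) :
    #{c | wedgeStateEquiv hx₀ (b, s) c = t} = (if b = t then 1 else 0) + #{c | s c = t} := by
  rw [card_filter, card_filter, ← (wedgeIndexEquiv hx₀).symm.sum_comp, Fintype.sum_option]
  simp only [wedgeStateEquiv_apply_symm, Option.elim_none, Option.elim_some]

end Wedge

theorem one_le_Gamma (d : ℕ) (C : Finset (ℤ × ℤ)) (s : {c // c ∈ C} → Bool) :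
    1 ≤ Gamma d C s :=
  (Set.ncard_pos ((Set.finite_Icc _ _).image _)).mpr
    ⟨_, 0, ⟨le_rfl, by positivity⟩, rfl⟩

section WedgeBracket

variable {d : ℕ} {C : Finset (ℤ × ℤ)} {x₀ : ℤ × ℤ} {bA : Bool}
  (hC : IsOLCD d C) (hx₀ : x₀ ∉ C.image fun p => (p.1 + 1, p.2 + 1))
  (hA : Rset bA x₀ = Rset true (1, 2 * (d : ℤ) + 2))
  (hB : Rset (!bA) x₀ = Rset false (1, 2 * (d : ℤ) + 2))

include hC hx₀ hA hB

theorem IsOLCD.Gamma_wedge (b : Bool) (s : {c // c ∈ C} → Bool) :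
    Gamma (d + 1) (wedge x₀ C) (wedgeStateEquiv hx₀ (b, s)) =
      Gamma d C s + if b = bA then 1 else 0 := by
  have hIcc : 2 * ((d + 1 : ℕ) : ℤ) = 2 * d + 2 := by push_cast; ring
  rw [Gamma, stateGroup_eq_closure, stateGens_wedge, hIcc]
  by_cases hb : b = bA
  · rw [hb, hA, if_pos rfl]
    exact hC.ncard_orbits_wedge_true s
  · rw [if_neg hb, Bool.eq_not_iff.mpr hb, hB]
    exact hC.ncard_orbits_wedge_false s

theorem IsOLCD.bracketTerm_wedge (b : Bool) (s : {c // c ∈ C} → Bool) :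
    bracketTerm (d + 1) (wedge x₀ C) (wedgeStateEquiv hx₀ (b, s)) =
      T (if b then 1 else -1) * (if b = bA then -T 2 - T (-2) else 1) * bracketTerm d C s := by
  unfold bracketTerm
  have hexp : ∀ m n : ℕ, (((if b = true then 1 else 0) + m : ℕ) : ℤ) -
      (((if b = false then 1 else 0) + n : ℕ) : ℤ) = (if b then 1 else -1) + (m - n) := by
    intro m n
    cases b <;> simp <;> ring
  rw [card_filter_wedgeStateEquiv, card_filter_wedgeStateEquiv, hC.Gamma_wedge hx₀ hA hB,
    Nat.sub_add_comm (one_le_Gamma d C s), pow_add, pow_ite, pow_one, pow_zero, hexp, T_add]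
  ring

theorem IsOLCD.bracket_wedge :
    bracket (d + 1) (wedge x₀ C) = -T (if bA then 3 else -3) * bracket d C := by
  unfold bracket
  rw [← (wedgeStateEquiv hx₀).sum_comp, Fintype.sum_prod_type, Fintype.sum_bool]
  simp only [hC.bracketTerm_wedge hx₀ hA hB, ← mul_sum, ← add_mul]
  congr 1
  cases bA <;> simp only [Bool.true_eq_false, Bool.false_eq_true, if_true, if_false, mul_one,
    mul_sub, mul_neg, ← T_add]
  · norm_num
    abel
  · norm_num

end WedgeBracket

open LaurentPolynomial in
/-- `⟨C₊^∧⟩ = (-A³)·⟨C⟩` and `⟨C₋^∧⟩ = (-A⁻³)·⟨C⟩`, where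
`C₊^∧ = {(i+1, j+1) : (i,j) ∈ C} ∪ {(1, 2d+2)}` and
`C₋^∧ = {(i+1, j+1) : (i,j) ∈ C} ∪ {(2d+2, 1)}`. -/
theorem bracket_monogon_wedge (d : ℕ) (C : Finset (ℤ × ℤ)) (hC : IsOLCD d C) :
    bracket (d + 1) (insert ((1 : ℤ), 2 * (d : ℤ) + 2)
        (C.image fun p => (p.1 + 1, p.2 + 1))) = (-T 3) * bracket d C ∧
    bracket (d + 1) (insert ((2 * (d : ℤ) + 2, (1 : ℤ)))
        (C.image fun p => (p.1 + 1, p.2 + 1))) = (-T (-3)) * bracket d C := by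
  constructor
  · exact hC.bracket_wedge (bA := true) (hC.notMem_image_shift (Or.inl le_rfl)) rfl rfl
  · exact hC.bracket_wedge (bA := false) (hC.notMem_image_shift (Or.inr le_rfl))
      (Rset_swap (i := 1) (j := 2 * d + 2) (by omega) true)
      (Rset_swap (i := 1) (j := 2 * d + 2) (by omega) false)
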